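/- For a t-distributed random variable with m degrees of freedom, density t_m and upper tail T̃_m, for every t > 0 one has T̃_m(t) < (t_m(t)/t)·(1 + t²/m). -/

import Mathlib

/-!
Put `h(s) = t_m(s) / s · (1 + s²/m)`. A direct computation gives `h' = -t_m · (1 + 1/s²)`, and
`h → 0` at infinity because `t_m(s) (1 + s²/m)` is a constant times `(1 + s²/m)^((1 - m)/2)`,
which is bounded for `m ≥ 1`. Integrating `h'` over `(t, ∞)` yields
`T̃_m(t) + ∫_t^∞ t_m(s)/s² ds = h(t)`, and the second integral is positive.
-/

open MeasureTheory Set Filter Topology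

/-- Density of Student's t-distribution with `m` degrees of freedom. -/
noncomputable def tPDF (m : ℕ) (t : ℝ) : ℝ :=
  Real.Gamma (((m : ℝ) + 1) / 2) / (Real.sqrt (Real.pi * m) * Real.Gamma ((m : ℝ) / 2)) *
    (1 + t ^ 2 / m) ^ (-(((m : ℝ) + 1) / 2))

/-- Upper tail function of Student's t-distribution with `m` degrees of freedom. -/
noncomputable def tTail (m : ℕ) (t : ℝ) : ℝ := ∫ s in Set.Ioi t, tPDF m s

theorem setIntegral_Ioi_lt_of_hasDerivAt_neg {f F h : ℝ → ℝ} {a : ℝ}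
    (hderiv : ∀ x ∈ Ici a, HasDerivAt h (-F x) x) (htop : Tendsto h atTop (𝓝 0))
    (hf : AEStronglyMeasurable f (volume.restrict (Ioi a)))
    (hf_nonneg : ∀ x ∈ Ioi a, 0 ≤ f x) (hf_lt : ∀ x ∈ Ioi a, f x < F x) :
    ∫ x in Ioi a, f x < h a := by
  have hF_nonpos : ∀ x ∈ Ioi a, -F x ≤ 0 := fun x hx =>
    neg_nonpos.2 ((hf_nonneg x hx).trans (hf_lt x hx).le)
  have hF_int : IntegrableOn F (Ioi a) := by
    simpa using (integrableOn_Ioi_deriv_of_nonpos' hderiv hF_nonpos htop).neg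
  have hF_eq : ∫ x in Ioi a, F x = h a := by
    have := integral_Ioi_of_hasDerivAt_of_nonpos' hderiv hF_nonpos htop
    rw [integral_neg] at this
    linarith
  have hf_int : IntegrableOn f (Ioi a) := by
    refine hF_int.mono' hf ?_
    filter_upwards [ae_restrict_mem measurableSet_Ioi] with x hx
    rw [Real.norm_of_nonneg (hf_nonneg x hx)]
    exact (hf_lt x hx).le
  have hgap : 0 < ∫ x in Ioi a, (F x - f x) := by
    have hsupp : Ioi a ⊆ Function.support (fun x => F x - f x) ∩ Ioi a := fun x hx =>
      ⟨(sub_pos.2 (hf_lt x hx)).ne', hx⟩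
    rw [setIntegral_pos_iff_support_of_nonneg_ae (f := fun x => F x - f x) _ (hF_int.sub hf_int)]
    · exact (measure_mono hsupp).trans_lt' (by simp)
    · filter_upwards [ae_restrict_mem measurableSet_Ioi] with x hx
      exact (sub_pos.2 (hf_lt x hx)).le
  rw [integral_sub hF_int hf_int, hF_eq] at hgap
  linarith

theorem measurable_tPDF (m : ℕ) : Measurable (tPDF m) := by
  unfold tPDF; fun_prop

theorem tPDF_pos {m : ℕ} (hm : m ≠ 0) (s : ℝ) : 0 < tPDF m s := by
  have hm' : (0 : ℝ) < m := by positivity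
  unfold tPDF
  have := Real.sqrt_pos.2 (mul_pos Real.pi_pos hm')
  have := Real.Gamma_pos_of_pos (by positivity : (0 : ℝ) < ((m : ℝ) + 1) / 2)
  have := Real.Gamma_pos_of_pos (by positivity : (0 : ℝ) < (m : ℝ) / 2)
  positivity

theorem hasDerivAt_tPDF {m : ℕ} (hm : m ≠ 0) (s : ℝ) :
    HasDerivAt (tPDF m) (-((m + 1) * s / (m + s ^ 2)) * tPDF m s) s := by
  have hm' : (m : ℝ) ≠ 0 := Nat.cast_ne_zero.2 hm
  have hB : HasDerivAt (fun x : ℝ => 1 + x ^ 2 / m) (2 * s / m) s := by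
    simpa using ((hasDerivAt_pow 2 s).div_const (m : ℝ)).const_add 1
  have hB0 : 1 + s ^ 2 / m ≠ 0 := by positivity
  refine ((hB.rpow_const (Or.inl hB0)).const_mul _).congr_deriv ?_
  unfold tPDF
  rw [Real.rpow_sub_one hB0]
  field_simp

theorem tPDF_mul_one_add_sq_div_le {m : ℕ} (hm : 1 ≤ m) (s : ℝ) :
    tPDF m s * (1 + s ^ 2 / m) ≤ tPDF m 0 := by
  have hB : 1 ≤ 1 + s ^ 2 / m := by simp only [le_add_iff_nonneg_right]; positivity
  have hC : 0 ≤ tPDF m 0 := (tPDF_pos (by omega) 0).le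
  have hexp : (1 + s ^ 2 / m) ^ (-(((m : ℝ) + 1) / 2) + 1) ≤ 1 := by
    have : (1 : ℝ) ≤ m := by exact_mod_cast hm
    exact Real.rpow_le_one_of_one_le_of_nonpos hB (by linarith)
  calc tPDF m s * (1 + s ^ 2 / m)
      = tPDF m 0 * (1 + s ^ 2 / m) ^ (-(((m : ℝ) + 1) / 2) + 1) := by
        rw [Real.rpow_add_one (by positivity)]
        simp only [tPDF, zero_pow two_ne_zero, zero_div, add_zero, Real.one_rpow, mul_one]
        ring
    _ ≤ tPDF m 0 := mul_le_of_le_one_right hC hexp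

theorem hasDerivAt_tPDF_div_mul {m : ℕ} (hm : m ≠ 0) {s : ℝ} (hs : s ≠ 0) :
    HasDerivAt (fun x => tPDF m x / x * (1 + x ^ 2 / m)) (-(tPDF m s * (1 + 1 / s ^ 2))) s := by
  have hm' : (m : ℝ) ≠ 0 := Nat.cast_ne_zero.2 hm
  have hB : HasDerivAt (fun x : ℝ => 1 + x ^ 2 / m) (2 * s / m) s := by
    simpa using ((hasDerivAt_pow 2 s).div_const (m : ℝ)).const_add 1
  refine (((hasDerivAt_tPDF hm s).div (hasDerivAt_id s) hs).mul hB).congr_deriv ?_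
  have : (m : ℝ) + s ^ 2 ≠ 0 := by positivity
  simp only [Pi.div_apply, id]
  field_simp
  ring

theorem tendsto_tPDF_div_mul_atTop {m : ℕ} (hm : 1 ≤ m) :
    Tendsto (fun x => tPDF m x / x * (1 + x ^ 2 / m)) atTop (𝓝 0) := by
  have hlim : Tendsto (fun x : ℝ => tPDF m 0 / x) atTop (𝓝 0) :=
    tendsto_const_nhds.div_atTop tendsto_id
  refine squeeze_zero' ?_ ?_ hlim <;> filter_upwards [eventually_gt_atTop 0] with x hx
  · have := tPDF_pos (m := m) (by omega) x
    positivity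
  · rw [div_mul_eq_mul_div]
    exact div_le_div_of_nonneg_right (tPDF_mul_one_add_sq_div_le hm x) hx.le

/-- Mill's ratio type bound for Student's t-distribution. -/
theorem stmt_3 (m : ℕ) (hm : 1 ≤ m) (t : ℝ) (ht : 0 < t) :
    tTail m t < tPDF m t / t * (1 + t ^ 2 / m) := by
  have hm0 : m ≠ 0 := Nat.one_le_iff_ne_zero.1 hm
  refine setIntegral_Ioi_lt_of_hasDerivAt_neg
    (fun s hs => hasDerivAt_tPDF_div_mul hm0 (ht.trans_le hs).ne') (tendsto_tPDF_div_mul_atTop hm)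
    (measurable_tPDF m).aestronglyMeasurable (fun s _ => (tPDF_pos hm0 s).le) fun s hs => ?_
  have : 0 < 1 / s ^ 2 := by have : 0 < s := ht.trans hs; positivity
  exact lt_mul_of_one_lt_right (tPDF_pos hm0 s) (by linarith)
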